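/- For all n ≥ 1, the dimension of the space P_↘(n) of n-ary operations of the operad P_↘ equals r_n, the number of planar rooted forests with n vertices; moreover the evaluation map p ↦ p.(•,…,•) from P_↘(n) to the linear span of planar forests of weight n is a linear bijection. -/

import Mathlib

/-- Planar rooted trees; `PTree.node []` is the single-vertex tree `•`. -/
inductive PTree : Type
  | node : List PTree → PTree

abbrev Forest : Type := List PTree

mutual
def PTree.weight : PTree → ℕ
  | .node c => 1 + Forest.weight c
def Forest.weight : Forest → ℕ
  | [] => 0
  | t :: r => PTree.weight t + Forest.weight r
end

/-- Grafting on the root: `F ↘ G` grafts `F` on the left of the root of the first tree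
of `G`. -/
def graftRoot (F : Forest) : Forest → Forest
  | [] => F
  | .node c :: rest => .node (F ++ c) :: rest

/-- Formal expressions in the two binary operations `m` and `↘` (here `g`). -/
inductive Expr : Type
  | leaf : Expr
  | m : Expr → Expr → Expr
  | g : Expr → Expr → Expr

/-- The arity (number of leaves) of an expression. -/
def Expr.arity : Expr → ℕ
  | .leaf => 1
  | .m a b => a.arity + b.arity
  | .g a b => a.arity + b.arity

/-- Evaluation of an expression at `(•, …, •)` in the `P_↘`-algebra of planar forests:
`m` is concatenation and `g` is root grafting `↘`. -/
def Expr.evalSE : Expr → Forest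
  | .leaf => [PTree.node []]
  | .m a b => a.evalSE ++ b.evalSE
  | .g a b => graftRoot a.evalSE b.evalSE

/-- The congruence generated by the defining relations of the operad `P_↘`:
`m∘(↘,I) = ↘∘(I,m)`, `m∘(m,I) = m∘(I,m)`, `↘∘(m,I) = ↘∘(I,↘)`,
together with compatibility with the operadic (tree) compositions. -/
inductive RelSE : Expr → Expr → Prop
  | rel1 (a b c : Expr) : RelSE (.m (.g a b) c) (.g a (.m b c))
  | rel2 (a b c : Expr) : RelSE (.m (.m a b) c) (.m a (.m b c))
  | rel3 (a b c : Expr) : RelSE (.g (.m a b) c) (.g a (.g b c))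
  | m_left {a a' : Expr} (b : Expr) : RelSE a a' → RelSE (.m a b) (.m a' b)
  | m_right (a : Expr) {b b' : Expr} : RelSE b b' → RelSE (.m a b) (.m a b')
  | g_left {a a' : Expr} (b : Expr) : RelSE a a' → RelSE (.g a b) (.g a' b)
  | g_right (a : Expr) {b b' : Expr} : RelSE b b' → RelSE (.g a b) (.g a b')

/-!
Reading the three relations as rewriting rules, every expression is equivalent to a normal form
determined by its evaluation: a forest `t₁ ⋯ tₖ` is encoded as `m(t₁, m(t₂, …))` and a tree
`B⁺(F)` with nonempty `F` as `F ↘ •`. Since the relations hold in the algebra of forests,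
evaluation is constant on classes; hence two expressions are equivalent iff their evaluations
agree, and the classes of arity `n` correspond to the forests of weight `n`.
-/

theorem Relation.EqvGen.map {α β : Type*} {r : α → α → Prop} {s : β → β → Prop} {f : α → β}
    (hf : ∀ a b, r a b → s (f a) (f b)) {a b : α} (h : EqvGen r a b) : EqvGen s (f a) (f b) := by
  induction h with
  | rel _ _ h => exact .rel _ _ (hf _ _ h)
  | refl => exact .refl _
  | symm _ _ _ ih => exact .symm _ _ ih
  | trans _ _ _ _ _ ih₁ ih₂ => exact .trans _ _ _ ih₁ ih₂

local infix:50 " ≈ₚ " => Relation.EqvGen RelSE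

theorem Forest.weight_append : ∀ A B : Forest, weight (A ++ B) = weight A + weight B
  | [], B => by simp [weight]
  | t :: r, B => by simp only [List.cons_append, weight, weight_append r B]; omega

theorem Forest.weight_graftRoot (A B : Forest) : weight (graftRoot A B) = weight A + weight B := by
  rcases B with _ | ⟨⟨c⟩, r⟩
  · simp [graftRoot, weight]
  · simp only [graftRoot, weight, PTree.weight, weight_append]
    omega

theorem graftRoot_append {B : Forest} (hB : B ≠ []) (A C : Forest) :
    graftRoot A B ++ C = graftRoot A (B ++ C) := by
  rcases B with _ | ⟨⟨c⟩, r⟩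
  · exact absurd rfl hB
  · simp [graftRoot]

theorem graftRoot_graftRoot {C : Forest} (hC : C ≠ []) (A B : Forest) :
    graftRoot A (graftRoot B C) = graftRoot (A ++ B) C := by
  rcases C with _ | ⟨⟨c⟩, r⟩
  · exact absurd rfl hC
  · simp [graftRoot]

namespace Expr

theorem evalSE_ne_nil : ∀ e : Expr, e.evalSE ≠ []
  | .leaf => List.cons_ne_nil _ _
  | .m a _ => by simp [evalSE, evalSE_ne_nil a]
  | .g _ b => by
    rcases hb : b.evalSE with _ | ⟨⟨c⟩, r⟩
    · exact absurd hb (evalSE_ne_nil b)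
    · simp [evalSE, hb, graftRoot]

theorem weight_evalSE : ∀ e : Expr, Forest.weight e.evalSE = e.arity
  | .leaf => rfl
  | .m a b => by simp [evalSE, arity, Forest.weight_append, weight_evalSE a, weight_evalSE b]
  | .g a b => by simp [evalSE, arity, Forest.weight_graftRoot, weight_evalSE a, weight_evalSE b]

theorem m_congr {a a' b b' : Expr} (ha : a ≈ₚ a') (hb : b ≈ₚ b') : .m a b ≈ₚ .m a' b' :=
  .trans _ _ _ (ha.map (f := (m · b)) fun _ _ => RelSE.m_left b)
    (hb.map (f := m a') fun _ _ => RelSE.m_right a')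

theorem g_congr {a a' b b' : Expr} (ha : a ≈ₚ a') (hb : b ≈ₚ b') : .g a b ≈ₚ .g a' b' :=
  .trans _ _ _ (ha.map (f := (g · b)) fun _ _ => RelSE.g_left b)
    (hb.map (f := g a') fun _ _ => RelSE.g_right a')

end Expr

theorem RelSE.evalSE_eq {a b : Expr} (h : RelSE a b) : a.evalSE = b.evalSE := by
  induction h with
  | rel1 _ b => exact graftRoot_append (Expr.evalSE_ne_nil b) _ _
  | rel2 => exact List.append_assoc _ _ _
  | rel3 _ _ c => exact (graftRoot_graftRoot (Expr.evalSE_ne_nil c) _ _).symm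
  | m_left _ _ ih | m_right _ _ ih | g_left _ _ ih | g_right _ _ ih => simp [Expr.evalSE, ih]

theorem Relation.EqvGen.evalSE_eq {a b : Expr} (h : a ≈ₚ b) : a.evalSE = b.evalSE :=
  (eq_equivalence.comap Expr.evalSE).eqvGen_iff.mp
    (Relation.EqvGen.mono (fun _ _ => RelSE.evalSE_eq) _ _ h)

mutual
def PTree.toExpr : PTree → Expr
  | .node [] => .leaf
  | .node (t :: r) => .g (t.consToExpr r) .leaf
  termination_by t => sizeOf t
/-- The normal form of the nonempty forest `t :: r`. -/
def PTree.consToExpr : PTree → Forest → Expr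
  | t, [] => t.toExpr
  | t, u :: r => .m t.toExpr (u.consToExpr r)
  termination_by t r => sizeOf t + sizeOf r
end

mutual
theorem PTree.evalSE_toExpr : ∀ t : PTree, t.toExpr.evalSE = [t]
  | .node [] => by simp [toExpr, Expr.evalSE]
  | .node (t :: r) => by simp [toExpr, Expr.evalSE, evalSE_consToExpr t r, graftRoot]
  termination_by t => sizeOf t
theorem PTree.evalSE_consToExpr : ∀ (t : PTree) (r : Forest), (t.consToExpr r).evalSE = t :: r
  | t, [] => by simp [consToExpr, evalSE_toExpr t]
  | t, u :: r => by simp [consToExpr, Expr.evalSE, evalSE_toExpr t, evalSE_consToExpr u r]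
  termination_by t r => sizeOf t + sizeOf r
end

namespace PTree

theorem m_consToExpr_consToExpr (t u : PTree) (r s : Forest) :
    .m (t.consToExpr r) (u.consToExpr s) ≈ₚ t.consToExpr (r ++ u :: s) := by
  induction r generalizing t with
  | nil => simp only [consToExpr, List.nil_append]; exact .refl _
  | cons v r ih =>
    simp only [consToExpr, List.cons_append]
    exact .trans _ _ _ (.rel _ _ (.rel2 _ _ _)) (Expr.m_congr (.refl _) (ih v))

theorem g_consToExpr_toExpr (t : PTree) (r c : Forest) :
    .g (t.consToExpr r) (node c).toExpr ≈ₚ (node (t :: (r ++ c))).toExpr := by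
  rcases c with _ | ⟨u, c⟩
  · simp only [toExpr, List.append_nil]; exact .refl _
  · simp only [toExpr]
    exact .trans _ _ _ (.symm _ _ (.rel _ _ (.rel3 _ _ _)))
      (Expr.g_congr (m_consToExpr_consToExpr t u r c) (.refl _))

theorem g_consToExpr_consToExpr (t : PTree) (r c s : Forest) :
    .g (t.consToExpr r) ((node c).consToExpr s) ≈ₚ (node (t :: (r ++ c))).consToExpr s := by
  rcases s with _ | ⟨v, s⟩
  · simp only [consToExpr]; exact g_consToExpr_toExpr t r c
  · simp only [consToExpr]
    exact .trans _ _ _ (.symm _ _ (.rel _ _ (.rel1 _ _ _)))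
      (Expr.m_congr (g_consToExpr_toExpr t r c) (.refl _))

end PTree

theorem Expr.exists_equiv_consToExpr : ∀ e : Expr,
    ∃ (t : PTree) (r : Forest), e.evalSE = t :: r ∧ e ≈ₚ t.consToExpr r
  | .leaf => ⟨.node [], [], rfl, by simp only [PTree.consToExpr, PTree.toExpr]; exact .refl _⟩
  | .m a b => by
    obtain ⟨ta, ra, ha, hea⟩ := exists_equiv_consToExpr a
    obtain ⟨tb, rb, hb, heb⟩ := exists_equiv_consToExpr b
    exact ⟨ta, ra ++ tb :: rb, by simp [evalSE, ha, hb],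
      .trans _ _ _ (m_congr hea heb) (PTree.m_consToExpr_consToExpr ta tb ra rb)⟩
  | .g a b => by
    obtain ⟨ta, ra, ha, hea⟩ := exists_equiv_consToExpr a
    obtain ⟨⟨c⟩, rb, hb, heb⟩ := exists_equiv_consToExpr b
    exact ⟨.node (ta :: (ra ++ c)), rb, by simp [evalSE, ha, hb, graftRoot],
      .trans _ _ _ (g_congr hea heb) (PTree.g_consToExpr_consToExpr ta ra c rb)⟩

theorem Expr.equiv_iff_evalSE_eq (a b : Expr) : a ≈ₚ b ↔ a.evalSE = b.evalSE := by
  refine ⟨Relation.EqvGen.evalSE_eq, fun h => ?_⟩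
  obtain ⟨ta, ra, ha, hea⟩ := exists_equiv_consToExpr a
  obtain ⟨tb, rb, hb, heb⟩ := exists_equiv_consToExpr b
  obtain ⟨rfl, rfl⟩ : ta = tb ∧ ra = rb := List.cons_eq_cons.mp (ha.symm.trans (h.trans hb))
  exact .trans _ _ _ hea (.symm _ _ heb)

theorem Forest.exists_evalSE_eq {F : Forest} (hF : F ≠ []) : ∃ e : Expr, e.evalSE = F := by
  obtain ⟨t, r, rfl⟩ := List.exists_cons_of_ne_nil hF
  exact ⟨t.consToExpr r, t.evalSE_consToExpr r⟩

namespace Expr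

def evalOfArity (n : ℕ) (e : {e : Expr // e.arity = n}) : {F : Forest // F.weight = n} :=
  ⟨e.1.evalSE, by rw [weight_evalSE, e.2]⟩

theorem evalOfArity_eq_iff {n : ℕ} {a b : {e : Expr // e.arity = n}} :
    evalOfArity n a = evalOfArity n b ↔ a.1 ≈ₚ b.1 :=
  Subtype.ext_iff.trans (equiv_iff_evalSE_eq a.1 b.1).symm

theorem evalOfArity_surjective {n : ℕ} (hn : 0 < n) : Function.Surjective (evalOfArity n) := by
  rintro ⟨F, hF⟩
  have hF₀ : F ≠ [] := by rintro rfl; simp [Forest.weight] at hF; omega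
  obtain ⟨e, he⟩ := Forest.exists_evalSE_eq hF₀
  exact ⟨⟨e, by rw [← weight_evalSE, he, hF]⟩, Subtype.ext he⟩

noncomputable def quotEquivForestOfWeight {n : ℕ} (hn : 0 < n) :
    Quot (fun a b : {e : Expr // e.arity = n} => a.1 ≈ₚ b.1) ≃ {F : Forest // F.weight = n} :=
  (Quot.congrRight fun _ _ => evalOfArity_eq_iff.symm).trans
    (Setoid.quotientKerEquivOfSurjective _ (evalOfArity_surjective hn))

end Expr

/-- `P_↘(n)` has the classes of `n`-ary expressions as a basis, so its dimension is the
cardinality of the quotient. -/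
theorem dim_P_graftRoot_and_ev_bijective (n : ℕ) (hn : 1 ≤ n) :
    Nat.card (Quot (fun a b : {e : Expr // e.arity = n} => Relation.EqvGen RelSE a.1 b.1)) =
      Nat.card {F : Forest // Forest.weight F = n} ∧
    (∀ a b : Expr, Relation.EqvGen RelSE a b ↔ a.evalSE = b.evalSE) ∧
    (∀ F : Forest, F ≠ [] → ∃ e : Expr, e.evalSE = F) ∧
    (∀ e : Expr, Forest.weight e.evalSE = e.arity) :=
  ⟨Nat.card_congr (Expr.quotEquivForestOfWeight hn), Expr.equiv_iff_evalSE_eq,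
    fun _ => Forest.exists_evalSE_eq, Expr.weight_evalSE⟩
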